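/- For a substitution σ unifying a term g with the subterm l|_p of l at position p, i.e. gσ = (l|_p)σ, if Var(d) ⊆ Var(g), then Var(lσ) ⊇ Var(lσ[p ← dσ]) ∪ Var((l|_p)σ). -/

import Mathlib

inductive Term (F V : Type) : Type where
  | var : V → Term F V
  | func : F → List (Term F V) → Term F V

namespace Term

variable {F V : Type}

mutual
  def subst (σ : V → Term F V) : Term F V → Term F V
    | .var v => σ v
    | .func f ts => .func f (substList σ ts)
  def substList (σ : V → Term F V) : List (Term F V) → List (Term F V)
    | [] => []
    | t :: ts => subst σ t :: substList σ ts
end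

inductive Occurs (v : V) : Term F V → Prop where
  | var : Occurs v (.var v)
  | func {f : F} {ts : List (Term F V)} {t : Term F V} :
      t ∈ ts → Occurs v t → Occurs v (.func f ts)

/-- The subterm of `t` at position `p` (a list of argument indices), if any. -/
def subtermAt : Term F V → List ℕ → Option (Term F V)
  | t, [] => some t
  | .var _, _ :: _ => none
  | .func _ ts, i :: p =>
      match ts[i]? with
      | some u => subtermAt u p
      | none => none

mutual
  /-- Replace the subterm of `t` at position `p` by `s`. -/
  def replaceAt : Term F V → List ℕ → Term F V → Term F V
    | _, [], s => s
    | .var v, _ :: _, _ => .var v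
    | .func f ts, i :: p, s => .func f (replaceList ts i p s)
  def replaceList : List (Term F V) → ℕ → List ℕ → Term F V → List (Term F V)
    | [], _, _, _ => []
    | t :: ts, 0, p, s => replaceAt t p s :: ts
    | t :: ts, n + 1, p, s => t :: replaceList ts n p s
end

/-- `t` is a variable. -/
def isVar : Term F V → Prop
  | .var _ => True
  | .func _ _ => False

end Term

namespace Term
variable {F V : Type}

theorem mem_substList {σ : V → Term F V} {t : Term F V} :
    ∀ {ts : List (Term F V)}, t ∈ ts → subst σ t ∈ substList σ ts
  | _ :: _, .head _ => by rw [substList]; exact .head _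
  | _ :: _, .tail _ h => by rw [substList]; exact .tail _ (mem_substList h)

theorem mem_substList_inv {σ : V → Term F V} {u : Term F V} :
    ∀ {ts : List (Term F V)}, u ∈ substList σ ts → ∃ t ∈ ts, u = subst σ t
  | [], h => by rw [substList] at h; cases h
  | a :: as, h => by
    rw [substList] at h
    rcases h with _ | ⟨_, h⟩
    · exact ⟨a, .head _, rfl⟩
    · obtain ⟨t, ht, rfl⟩ := mem_substList_inv h
      exact ⟨t, .tail _ ht, rfl⟩

theorem occurs_subst_of {σ : V → Term F V} {v w : V} {t : Term F V}
    (h1 : Occurs w t) (h2 : Occurs v (σ w)) : Occurs v (subst σ t) := by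
  induction h1 with
  | var => rw [subst]; exact h2
  | func hmem _ ih => rw [subst]; exact .func (mem_substList hmem) ih

theorem occurs_subst_inv {σ : V → Term F V} {v : V} :
    ∀ t : Term F V, Occurs v (subst σ t) → ∃ w, Occurs w t ∧ Occurs v (σ w)
  | .var w, h => by rw [subst] at h; exact ⟨w, .var, h⟩
  | .func f ts, h => by
    rw [subst] at h
    rcases h with _ | ⟨hmem, hocc⟩
    obtain ⟨t, ht, rfl⟩ := mem_substList_inv hmem
    have hs : sizeOf t < sizeOf (Term.func f ts) := by
      have := List.sizeOf_lt_of_mem ht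
      simp only [Term.func.sizeOf_spec]
      omega
    obtain ⟨w, hw, hv⟩ := occurs_subst_inv t hocc
    exact ⟨w, .func ht hw, hv⟩

theorem occurs_subtermAt {v : V} :
    ∀ (l : Term F V) (p : List ℕ) (lp : Term F V),
      subtermAt l p = some lp → Occurs v lp → Occurs v l := by
  intro l p
  induction p generalizing l with
  | nil => intro lp h hv; rw [subtermAt] at h; cases h; exact hv
  | cons i q ih =>
    intro lp h hv
    match l with
    | .var w => rw [subtermAt] at h; cases h
    | .func f ts =>
      rw [subtermAt] at h
      cases hg : ts[i]? with
      | none => rw [hg] at h; cases h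
      | some u =>
        rw [hg] at h
        exact .func (List.mem_of_getElem? hg) (ih u lp h hv)

theorem mem_replaceList {u s : Term F V} {p : List ℕ} :
    ∀ (ts : List (Term F V)) (i : ℕ), u ∈ replaceList ts i p s →
      u ∈ ts ∨ ∃ t ∈ ts, u = replaceAt t p s
  | [], i, h => by rw [replaceList] at h; cases h
  | a :: as, 0, h => by
    rw [replaceList] at h
    rcases h with _ | ⟨_, h⟩
    · exact Or.inr ⟨a, .head _, rfl⟩
    · exact Or.inl (.tail _ h)
  | a :: as, n + 1, h => by
    rw [replaceList] at h
    rcases h with _ | ⟨_, h⟩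
    · exact Or.inl (.head _)
    · rcases mem_replaceList as n h with h1 | ⟨t, ht, rfl⟩
      · exact Or.inl (.tail _ h1)
      · exact Or.inr ⟨t, .tail _ ht, rfl⟩

theorem occurs_replaceAt {v : V} :
    ∀ (p : List ℕ) (t s : Term F V),
      Occurs v (replaceAt t p s) → Occurs v t ∨ Occurs v s := by
  intro p
  induction p with
  | nil => intro t s h; rw [replaceAt] at h; exact Or.inr h
  | cons i q ih =>
    intro t s h
    match t with
    | .var w => rw [replaceAt] at h; exact Or.inl h
    | .func f ts =>
      rw [replaceAt] at h
      rcases h with _ | ⟨hmem, hocc⟩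
      rcases mem_replaceList ts i hmem with h1 | ⟨t', ht', rfl⟩
      · exact Or.inl (.func h1 hocc)
      · rcases ih t' s hocc with h1 | h1
        · exact Or.inl (.func ht' h1)
        · exact Or.inr h1

end Term

/-- For a substitution `σ` unifying `g` with the subterm `l|_p`
of `l`, if `Var(d) ⊆ Var(g)`, then
`Var(lσ) ⊇ Var(lσ[p ← dσ]) ∪ Var((l|_p)σ)`. -/
theorem vars_of_replacement_subset
    (F V : Type) (l g d : Term F V)
    (p : List ℕ) (lp : Term F V)
    (hp : Term.subtermAt l p = some lp)
    (hd : ∀ v : V, Term.Occurs v d → Term.Occurs v g)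
    (σ : V → Term F V)
    (hunif : Term.subst σ g = Term.subst σ lp) :
    ∀ v : V,
      (Term.Occurs v (Term.replaceAt (Term.subst σ l) p (Term.subst σ d)) ∨
        Term.Occurs v (Term.subst σ lp)) →
      Term.Occurs v (Term.subst σ l) := by
  have key : ∀ v : V, Term.Occurs v (Term.subst σ lp) → Term.Occurs v (Term.subst σ l) := by
    intro v h
    obtain ⟨w, hw, hv⟩ := Term.occurs_subst_inv _ h
    exact Term.occurs_subst_of (Term.occurs_subtermAt l p lp hp hw) hv
  intro v h
  rcases h with h | h
  · rcases Term.occurs_replaceAt p _ _ h with h1 | h1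
    · exact h1
    · obtain ⟨w, hw, hv⟩ := Term.occurs_subst_inv _ h1
      have : Term.Occurs v (Term.subst σ g) := Term.occurs_subst_of (hd w hw) hv
      rw [hunif] at this
      exact key v this
  · exact key v h
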